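/- Let items 1,…,n have positive integer weights w_1,…,w_n and natural-number profits p_1,…,p_n with p_i ≤ p_max for all i, and let M = Σ_{i=1}^n w_i. Define the profit sequence P : {0,…,M} → ℕ by P(j) = max{ Σ_{i∈S} p_i : S ⊆ {1,…,n}, Σ_{i∈S} w_i ≤ j }. Then P is p_max-near concave: there exists a concave function P̃ : {0,…,M} → ℝ such that P̃(j) − p_max ≤ P(j) ≤ P̃(j) for all j ∈ {0,…,M}. -/
import Mathlib


/-- A function `φ` on `{0,…,M}` is concave if `φ(i+1) − φ(i) ≤ φ(i) − φ(i−1)`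
for all `1 ≤ i ≤ M−1`. -/
def IsConcaveSeq (M : ℕ) (φ : ℕ → ℝ) : Prop :=
  ∀ i, 1 ≤ i → i + 1 ≤ M → φ (i + 1) - φ i ≤ φ i - φ (i - 1)

/-- The profit sequence of a Knapsack instance with maximum profit
`pmax` is `pmax`-near concave. -/
theorem profitSeq_near_concave (n : ℕ) (w p : Fin n → ℕ) (pmax : ℕ)
    (hw : ∀ i, 0 < w i) (hp : ∀ i, p i ≤ pmax)
    (M : ℕ) (hM : M = ∑ i, w i) (P : ℕ → ℕ)
    (hP : ∀ j ≤ M,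
      IsGreatest {v : ℕ | ∃ S : Finset (Fin n), ∑ i ∈ S, w i ≤ j ∧ v = ∑ i ∈ S, p i} (P j)) :
    ∃ Pt : ℕ → ℝ, IsConcaveSeq M Pt ∧
      ∀ j ≤ M, Pt j - pmax ≤ (P j : ℝ) ∧ (P j : ℝ) ≤ Pt j := by
  classical
  -- densities
  set d : Fin n → ℝ := fun i => (p i : ℝ) / (w i : ℝ) with hd
  set R : Finset ℝ := insert 0 (Finset.univ.image d) with hR
  have hR0 : (0:ℝ) ∈ R := by simp [hR]
  have hRne : R.Nonempty := ⟨0, hR0⟩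
  have hdR : ∀ i, d i ∈ R := fun i =>
    Finset.mem_insert_of_mem (Finset.mem_image_of_mem d (Finset.mem_univ i))
  have hdw : ∀ i, d i * (w i : ℝ) = (p i : ℝ) := fun i => by
    have hne : (w i : ℝ) ≠ 0 := Nat.cast_ne_zero.mpr (hw i).ne'
    rw [hd]
    field_simp
  have hRnonneg : ∀ ρ ∈ R, (0:ℝ) ≤ ρ := by
    intro ρ hρ
    rcases Finset.mem_insert.mp hρ with h | h
    · simp [h]
    · obtain ⟨i, _, rfl⟩ := Finset.mem_image.mp h
      positivity
  set L : ℝ → ℕ → ℝ := fun ρ j => (∑ i, max ((p i:ℝ) - ρ * w i) 0) + ρ * j with hL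
  -- the active set for threshold ρ
  set A : ℝ → Finset (Fin n) := fun ρ => Finset.univ.filter (fun i => ρ * w i < (p i:ℝ)) with hA
  have hLval : ∀ ρ (j : ℕ), L ρ j = (∑ i ∈ A ρ, ((p i:ℝ) - ρ * w i)) + ρ * j := by
    intro ρ j
    have : (∑ i, max ((p i:ℝ) - ρ * w i) 0) = ∑ i ∈ A ρ, ((p i:ℝ) - ρ * w i) := by
      rw [hA]
      rw [← Finset.sum_filter_add_sum_filter_not Finset.univ (fun i => ρ * w i < (p i:ℝ))]
      have h1 : ∑ i ∈ Finset.univ.filter (fun i => ρ * w i < (p i:ℝ)),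
          max ((p i:ℝ) - ρ * w i) 0 = ∑ i ∈ Finset.univ.filter (fun i => ρ * w i < (p i:ℝ)),
          ((p i:ℝ) - ρ * w i) := by
        apply Finset.sum_congr rfl
        intro i hi
        have := (Finset.mem_filter.mp hi).2
        rw [max_eq_left (by linarith)]
      have h2 : ∑ i ∈ Finset.univ.filter (fun i => ¬ ρ * w i < (p i:ℝ)),
          max ((p i:ℝ) - ρ * w i) 0 = 0 := by
        apply Finset.sum_eq_zero
        intro i hi
        have := (Finset.mem_filter.mp hi).2
        rw [max_eq_right (by linarith [not_lt.mp this])]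
      rw [h1, h2, add_zero]
    simp only [hL]
    rw [this]
  refine ⟨fun j => R.inf' hRne (fun ρ => L ρ j), ?_, ?_⟩
  · -- concavity
    intro i h1 _
    obtain ⟨ρ0, hρ0R, hρ0⟩ := R.exists_mem_eq_inf' hRne (fun ρ => L ρ i)
    have hA1 : R.inf' hRne (fun ρ => L ρ (i+1)) ≤ L ρ0 (i+1) := Finset.inf'_le _ hρ0R
    have hB1 : R.inf' hRne (fun ρ => L ρ (i-1)) ≤ L ρ0 (i-1) := Finset.inf'_le _ hρ0R
    have hsum : L ρ0 (i+1) + L ρ0 (i-1) = 2 * L ρ0 i := by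
      simp only [hL]
      have : ((i-1:ℕ):ℝ) = (i:ℝ) - 1 := by
        rw [Nat.cast_sub h1]; norm_num
      push_cast [this]
      ring
    dsimp only
    rw [hρ0]
    linarith
  · -- bounds
    intro j hj
    obtain ⟨hmem, hub⟩ := hP j hj
    obtain ⟨S, hSw, hSp⟩ := hmem
    have hfeas : ∀ T : Finset (Fin n), (∑ i ∈ T, w i) ≤ j → ((∑ i ∈ T, p i : ℕ) : ℝ) ≤ (P j : ℝ) := by
      intro T hT
      exact_mod_cast Nat.cast_le.mpr (hub ⟨T, hT, rfl⟩)
    constructor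
    · -- Pt j - pmax ≤ P j : find a good threshold
      have key : ∃ ρ ∈ R, L ρ j ≤ (P j : ℝ) + pmax := by
        set T : Finset ℝ := R.filter (fun ρ => (∑ i ∈ A ρ, w i) ≤ j) with hT
        have hTne : T.Nonempty := by
          refine ⟨R.max' hRne, Finset.mem_filter.mpr ⟨R.max'_mem hRne, ?_⟩⟩
          have : A (R.max' hRne) = ∅ := by
            rw [hA]
            apply Finset.filter_eq_empty_iff.mpr
            intro i _
            have hdle : d i ≤ R.max' hRne := Finset.le_max' R _ (hdR i)
            have hwpos : (0:ℝ) < (w i : ℝ) := by exact_mod_cast hw i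
            have := mul_le_mul_of_nonneg_right hdle (le_of_lt hwpos)
            rw [hdw i] at this
            linarith
          simp [this]
        set ρs : ℝ := T.min' hTne with hρs
        have hρsT : ρs ∈ T := T.min'_mem hTne
        have hρsR : ρs ∈ R := (Finset.mem_filter.mp hρsT).1
        have hρsw : (∑ i ∈ A ρs, w i) ≤ j := (Finset.mem_filter.mp hρsT).2
        have hρsnn : (0:ℝ) ≤ ρs := hRnonneg _ hρsR
        rcases eq_or_lt_of_le hρsnn with heq | hpos
        · -- ρs = 0 : the whole active set fits
          refine ⟨ρs, hρsR, ?_⟩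
          rw [hLval, ← heq]
          simp only [zero_mul, mul_zero, sub_zero, add_zero]
          have : (∑ i ∈ A (0:ℝ), (p i : ℝ)) = ((∑ i ∈ A (0:ℝ), p i : ℕ) : ℝ) := by push_cast; rfl
          rw [this]
          have h1 : ((∑ i ∈ A (0:ℝ), p i : ℕ) : ℝ) ≤ (P j : ℝ) := by
            apply hfeas
            rw [← heq] at hρsw; exact hρsw
          have h2 : (0:ℝ) ≤ (pmax:ℝ) := by positivity
          linarith
        · -- ρs > 0 : predecessor threshold argument
          -- predecessor
          set R' : Finset ℝ := R.filter (fun r => r < ρs) with hR'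
          have hR'ne : R'.Nonempty := ⟨0, Finset.mem_filter.mpr ⟨hR0, hpos⟩⟩
          set ρh : ℝ := R'.max' hR'ne with hρh
          have hρhR' : ρh ∈ R' := R'.max'_mem hR'ne
          have hρhR : ρh ∈ R := (Finset.mem_filter.mp hρhR').1
          have hρhlt : ρh < ρs := (Finset.mem_filter.mp hρhR').2
          have hgap : ∀ r ∈ R, ρh < r → ρs ≤ r := by
            intro r hr hlt
            by_contra hcon
            push_neg at hcon
            exact absurd (Finset.le_max' R' r (Finset.mem_filter.mpr ⟨hr, hcon⟩)) (not_le.mpr hlt)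
          have hρhbig : ¬ (∑ i ∈ A ρh, w i) ≤ j := by
            intro hcon
            have : ρh ∈ T := Finset.mem_filter.mpr ⟨hρhR, hcon⟩
            exact absurd (T.min'_le _ this) (not_le.mpr hρhlt)
          -- A ρh = A ρs ∪ E  where E = items with p i = ρs * w i
          set E : Finset (Fin n) := Finset.univ.filter (fun i => (p i:ℝ) = ρs * w i) with hE
          have hdisj : Disjoint (A ρs) E := by
            rw [Finset.disjoint_left]
            intro i hi hiE
            have h1 := (Finset.mem_filter.mp hi).2
            have h2 := (Finset.mem_filter.mp hiE).2
            linarith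
          have hsplit : A ρh = A ρs ∪ E := by
            ext i
            simp only [hA, hE, Finset.mem_union, Finset.mem_filter, Finset.mem_univ, true_and]
            have hwpos : (0:ℝ) < (w i : ℝ) := by exact_mod_cast hw i
            constructor
            · intro hlt
              have hdgt : ρh < d i := by
                rw [hd, lt_div_iff₀ hwpos]; exact hlt
              have hge : ρs ≤ d i := hgap _ (hdR i) hdgt
              have : ρs * w i ≤ (p i:ℝ) := by
                have := mul_le_mul_of_nonneg_right hge (le_of_lt hwpos)
                rw [hdw i] at this; linarith
              rcases lt_or_eq_of_le this with h | h
              · exact Or.inl h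
              · exact Or.inr h.symm
            · intro hor
              have : ρs * w i ≤ (p i:ℝ) := by
                rcases hor with h | h
                · exact le_of_lt h
                · exact le_of_eq h.symm
              have : ρh * w i < ρs * w i := by
                exact mul_lt_mul_of_pos_right hρhlt hwpos
              linarith
          have hwsplit : (∑ i ∈ A ρh, w i) = (∑ i ∈ A ρs, w i) + (∑ i ∈ E, w i) := by
            rw [hsplit, Finset.sum_union hdisj]
          -- greedily pick a maximal-weight subset U of E that still fits
          set F : Finset (Finset (Fin n)) :=
            E.powerset.filter (fun U => (∑ i ∈ A ρs, w i) + (∑ i ∈ U, w i) ≤ j) with hF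
          have hFne : F.Nonempty := by
            refine ⟨∅, Finset.mem_filter.mpr ⟨Finset.empty_mem_powerset _, ?_⟩⟩
            simpa using hρsw
          obtain ⟨U, hUF, hUmax⟩ := F.exists_max_image (fun U => ∑ i ∈ U, w i) hFne
          have hUE : U ⊆ E := Finset.mem_powerset.mp (Finset.mem_filter.mp hUF).1
          have hUw : (∑ i ∈ A ρs, w i) + (∑ i ∈ U, w i) ≤ j := (Finset.mem_filter.mp hUF).2
          have hUne : U ≠ E := by
            intro hcon
            rw [hcon] at hUw
            omega
          obtain ⟨e, heE, heU⟩ := Finset.exists_of_ssubset (lt_of_le_of_ne hUE hUne)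
          have hover : j < (∑ i ∈ A ρs, w i) + (∑ i ∈ U, w i) + w e := by
            by_contra hcon
            push_neg at hcon
            have hmem : insert e U ∈ F := by
              refine Finset.mem_filter.mpr ⟨Finset.mem_powerset.mpr ?_, ?_⟩
              · exact Finset.insert_subset heE hUE
              · rw [Finset.sum_insert heU]; omega
            have := hUmax _ hmem
            rw [Finset.sum_insert heU] at this
            have := hw e
            omega
          -- the set V = A ρs ∪ U is feasible
          set V : Finset (Fin n) := A ρs ∪ U with hV
          have hdisjU : Disjoint (A ρs) U := hdisj.mono_right hUE
          have hVw : (∑ i ∈ V, w i) ≤ j := by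
            rw [hV, Finset.sum_union hdisjU]; exact hUw
          have hVP : ((∑ i ∈ V, p i : ℕ) : ℝ) ≤ (P j : ℝ) := hfeas V hVw
          -- compute L ρs j
          refine ⟨ρs, hρsR, ?_⟩
          rw [hLval]
          have hUzero : (∑ i ∈ U, ((p i:ℝ) - ρs * w i)) = 0 := by
            apply Finset.sum_eq_zero
            intro i hi
            have := (Finset.mem_filter.mp (hUE hi)).2
            linarith
          have hVsum : (∑ i ∈ A ρs, ((p i:ℝ) - ρs * w i)) =
              (∑ i ∈ V, ((p i:ℝ) - ρs * w i)) := by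
            rw [hV, Finset.sum_union hdisjU, hUzero, add_zero]
          rw [hVsum, Finset.sum_sub_distrib]
          have hcast1 : (∑ i ∈ V, (p i:ℝ)) = ((∑ i ∈ V, p i : ℕ) : ℝ) := by push_cast; rfl
          have hcast2 : (∑ i ∈ V, ρs * (w i:ℝ)) = ρs * ((∑ i ∈ V, w i : ℕ) : ℝ) := by
            rw [← Finset.mul_sum]; push_cast; rfl
          rw [hcast1, hcast2]
          -- ρs * (j - w V) ≤ ρs * w e = p e ≤ pmax
          have hje : (j:ℝ) - ((∑ i ∈ V, w i : ℕ) : ℝ) ≤ (w e : ℝ) := by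
            have : (j:ℝ) < ((∑ i ∈ V, w i : ℕ) : ℝ) + (w e : ℝ) := by
              have h := hover
              rw [hV, Finset.sum_union hdisjU]
              push_cast
              rw [hV, Finset.sum_union hdisjU] at *
              exact_mod_cast h
            linarith
          have hkey : ρs * ((j:ℝ) - ((∑ i ∈ V, w i : ℕ) : ℝ)) ≤ (pmax : ℝ) := by
            have h1 : ρs * ((j:ℝ) - ((∑ i ∈ V, w i : ℕ) : ℝ)) ≤ ρs * (w e : ℝ) :=
              mul_le_mul_of_nonneg_left hje (le_of_lt hpos)
            have h2 : ρs * (w e : ℝ) = (p e : ℝ) := ((Finset.mem_filter.mp heE).2).symm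
            have h3 : (p e : ℝ) ≤ (pmax : ℝ) := by exact_mod_cast hp e
            linarith
          nlinarith [hVP, hkey]
      obtain ⟨ρ, hρR, hle⟩ := key
      have := Finset.inf'_le (fun ρ => L ρ j) hρR
      linarith
    · -- P j ≤ Pt j
      rw [Finset.le_inf'_iff]
      intro ρ hρ
      have hρnn := hRnonneg ρ hρ
      have hstep : (P j : ℝ) = ∑ i ∈ S, (p i : ℝ) := by rw [hSp]; push_cast; rfl
      rw [hstep]
      simp only [hL]
      have h1 : ∀ i ∈ S, (p i:ℝ) ≤ max ((p i:ℝ) - ρ * w i) 0 + ρ * w i := by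
        intro i _
        have := le_max_left ((p i:ℝ) - ρ * w i) 0
        linarith
      calc ∑ i ∈ S, (p i : ℝ) ≤ ∑ i ∈ S, (max ((p i:ℝ) - ρ * w i) 0 + ρ * w i) :=
            Finset.sum_le_sum h1
        _ = (∑ i ∈ S, max ((p i:ℝ) - ρ * w i) 0) + ρ * ∑ i ∈ S, (w i:ℝ) := by
            rw [Finset.sum_add_distrib, Finset.mul_sum]
        _ ≤ (∑ i, max ((p i:ℝ) - ρ * w i) 0) + ρ * j := by
            have hs : (∑ i ∈ S, max ((p i:ℝ) - ρ * w i) 0) ≤ ∑ i, max ((p i:ℝ) - ρ * w i) 0 :=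
              Finset.sum_le_sum_of_subset_of_nonneg (Finset.subset_univ S)
                (fun i _ _ => le_max_right _ 0)
            have hww : ρ * ∑ i ∈ S, (w i:ℝ) ≤ ρ * j := by
              apply mul_le_mul_of_nonneg_left _ hρnn
              calc ∑ i ∈ S, (w i:ℝ) = ((∑ i ∈ S, w i : ℕ) : ℝ) := by push_cast; rfl
                _ ≤ (j:ℝ) := by exact_mod_cast hSw
            linarith
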